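/- arXiv:2401.14790 — 2 statements merged into one kernel-verified Lean document; each statement's English description precedes it below -/
import Mathlib

section
/- Let A be a commutative ring and M an A-module, B = Sym_A(M). Then the natural map M ⊗_A B → Ω_{B/A}, m ⊗ b ↦ (dm)·b, is an isomorphism of B-modules. -/
/-! The symmetric algebra of a module, realized as a quotient of the tensor algebra. -/

variable (A : Type) [CommRing A] (M : Type) [AddCommGroup M] [Module A M]

/-- The relation imposing commutativity of elements of `M` in the tensor algebra. -/
inductive SymRel : TensorAlgebra A M → TensorAlgebra A M → Prop
  | mul_comm (m m' : M) :
      SymRel (TensorAlgebra.ι A m * TensorAlgebra.ι A m')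
        (TensorAlgebra.ι A m' * TensorAlgebra.ι A m)

/-- The symmetric algebra `Sym_A(M)`. -/
def SymmAlg := RingQuot (SymRel A M)

instance : Ring (SymmAlg A M) := inferInstanceAs (Ring (RingQuot (SymRel A M)))
instance : Algebra A (SymmAlg A M) := inferInstanceAs (Algebra A (RingQuot (SymRel A M)))

/-- The projection from the tensor algebra onto the symmetric algebra. -/
noncomputable def SymmAlg.mk : TensorAlgebra A M →ₐ[A] SymmAlg A M :=
  RingQuot.mkAlgHom A (SymRel A M)

theorem SymmAlg.mk_mul_comm (a : TensorAlgebra A M) :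
    ∀ b, SymmAlg.mk A M a * SymmAlg.mk A M b = SymmAlg.mk A M b * SymmAlg.mk A M a := by
  induction a using TensorAlgebra.induction with
  | algebraMap r => intro b; rw [AlgHom.commutes]; exact Algebra.commutes r _
  | ι m =>
    intro b
    induction b using TensorAlgebra.induction with
    | algebraMap r => rw [AlgHom.commutes]; exact (Algebra.commutes r _).symm
    | ι m' =>
      have h := RingQuot.mkAlgHom_rel A (SymRel.mul_comm (A := A) (M := M) m m')
      rw [map_mul, map_mul] at h
      exact h
    | mul x y hx hy =>
      calc SymmAlg.mk A M (TensorAlgebra.ι A m) * SymmAlg.mk A M (x * y)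
          = SymmAlg.mk A M (TensorAlgebra.ι A m) * (SymmAlg.mk A M x * SymmAlg.mk A M y) := by
            rw [map_mul]
        _ = (SymmAlg.mk A M (TensorAlgebra.ι A m) * SymmAlg.mk A M x) * SymmAlg.mk A M y :=
            (mul_assoc _ _ _).symm
        _ = (SymmAlg.mk A M x * SymmAlg.mk A M (TensorAlgebra.ι A m)) * SymmAlg.mk A M y := by
            rw [hx]
        _ = SymmAlg.mk A M x * (SymmAlg.mk A M (TensorAlgebra.ι A m) * SymmAlg.mk A M y) :=
            mul_assoc _ _ _
        _ = SymmAlg.mk A M x * (SymmAlg.mk A M y * SymmAlg.mk A M (TensorAlgebra.ι A m)) := by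
            rw [hy]
        _ = (SymmAlg.mk A M x * SymmAlg.mk A M y) * SymmAlg.mk A M (TensorAlgebra.ι A m) :=
            (mul_assoc _ _ _).symm
        _ = SymmAlg.mk A M (x * y) * SymmAlg.mk A M (TensorAlgebra.ι A m) := by rw [map_mul]
    | add x y hx hy => rw [map_add, mul_add, add_mul, hx, hy]
  | mul x y hx hy =>
    intro b
    calc SymmAlg.mk A M (x * y) * SymmAlg.mk A M b
        = SymmAlg.mk A M x * (SymmAlg.mk A M y * SymmAlg.mk A M b) := by
          rw [map_mul, mul_assoc]
      _ = SymmAlg.mk A M x * (SymmAlg.mk A M b * SymmAlg.mk A M y) := by rw [hy]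
      _ = (SymmAlg.mk A M x * SymmAlg.mk A M b) * SymmAlg.mk A M y := (mul_assoc _ _ _).symm
      _ = (SymmAlg.mk A M b * SymmAlg.mk A M x) * SymmAlg.mk A M y := by rw [hx]
      _ = SymmAlg.mk A M b * SymmAlg.mk A M (x * y) := by rw [map_mul, mul_assoc]
  | add x y hx hy => intro b; rw [map_add, add_mul, mul_add, hx, hy]

noncomputable instance : CommRing (SymmAlg A M) :=
  { (inferInstance : Ring (SymmAlg A M)) with
    mul_comm := fun a b => by
      obtain ⟨a, rfl⟩ := RingQuot.mkAlgHom_surjective A (SymRel A M) a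
      obtain ⟨b, rfl⟩ := RingQuot.mkAlgHom_surjective A (SymRel A M) b
      exact SymmAlg.mk_mul_comm A M a b }

/-- The canonical inclusion of `M` into the symmetric algebra. -/
noncomputable def SymmAlg.ι : M →ₗ[A] SymmAlg A M :=
  (SymmAlg.mk A M).toLinearMap ∘ₗ TensorAlgebra.ι A

open scoped TensorProduct

noncomputable section

/-- The map `m ↦ d(ι m)` from `M` to the Kähler differentials of `Sym_A(M)`. -/
def dIota : M →ₗ[A] Ω[SymmAlg A M⁄A] :=
  (KaehlerDifferential.D A (SymmAlg A M)).toLinearMap ∘ₗ SymmAlg.ι A M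

/-- The natural map `M ⊗_A Sym_A(M) → Ω_{Sym_A(M)/A}`, `m ⊗ b ↦ (dm)·b`. -/
def koszulMap : M ⊗[A] SymmAlg A M →ₗ[A] Ω[SymmAlg A M⁄A] :=
  TensorProduct.lift
    { toFun := fun m =>
        (LinearMap.toSpanSingleton (SymmAlg A M) (Ω[SymmAlg A M⁄A])
          (dIota A M m)).restrictScalars A
      map_add' := by
        intro m m'
        ext b
        simp [LinearMap.toSpanSingleton_apply, map_add, smul_add]
      map_smul' := by
        intro a m
        ext b
        simp only [LinearMap.coe_restrictScalars, LinearMap.toSpanSingleton_apply,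
          map_smul, RingHom.id_apply, LinearMap.smul_apply]
        rw [smul_comm] }

/-! A derivation out of `B = Sym_A(M)` is freely determined by its restriction to `M`: for a
linear `f : M → N`, the algebra map `B → B ⊕ N` into the square-zero extension extending
`m ↦ (m, f m)` is a section of the projection, so its second component is a derivation.
Taking `f m = 1 ⊗ m` gives `Ω_{B/A} → B ⊗_A M`, inverse to the `B`-linear extension of `d|_M`:
both composites are `B`-linear and fixed on the generators `d m`, resp. `1 ⊗ m`. -/

open TrivSqZeroExt

section TrivSqZeroExt

variable {R B N : Type*} [CommRing R] [CommRing B] [Algebra R B] [AddCommGroup N] [Module B N]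
  [Module Bᵐᵒᵖ N] [IsCentralScalar B N] [Module R N] [IsScalarTower R B N]
  [IsScalarTower R Bᵐᵒᵖ N]

def Derivation.ofSectionTrivSqZeroExt (φ : B →ₐ[R] TrivSqZeroExt B N)
    (hφ : (fstHom R B N).comp φ = AlgHom.id R B) : Derivation R B N where
  toLinearMap := (sndHom B N).restrictScalars R ∘ₗ φ.toLinearMap
  map_one_eq_zero' := by simp
  leibniz' a b := by
    have hfst (c : B) : (φ c).fst = c := AlgHom.congr_fun hφ c
    simp [snd_mul, hfst, add_comm]

end TrivSqZeroExt

namespace SymmAlg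

variable {A M}

def lift {C : Type*} [CommRing C] [Algebra A C] (f : M →ₗ[A] C) : SymmAlg A M →ₐ[A] C :=
  RingQuot.liftAlgHom A ⟨TensorAlgebra.lift A f, by
    rintro _ _ ⟨m, m'⟩
    simp only [map_mul, TensorAlgebra.lift_ι_apply, mul_comm]⟩

@[simp]
theorem lift_ι {C : Type*} [CommRing C] [Algebra A C] (f : M →ₗ[A] C) (m : M) :
    lift f (ι A M m) = f m :=
  (RingQuot.liftAlgHom_mkAlgHom_apply A _ _ _).trans (TensorAlgebra.lift_ι_apply f m)

theorem adjoin_range_ι : Algebra.adjoin A (Set.range (ι A M)) = ⊤ := by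
  rw [ι, LinearMap.coe_comp, Set.range_comp, AlgHom.coe_toLinearMap, ← AlgHom.map_adjoin,
    TensorAlgebra.adjoin_range_ι, Algebra.map_top, AlgHom.range_eq_top]
  exact RingQuot.mkAlgHom_surjective A (SymRel A M)

theorem algHom_ext {C : Type*} [Semiring C] [Algebra A C] {f g : SymmAlg A M →ₐ[A] C}
    (h : ∀ m, f (ι A M m) = g (ι A M m)) : f = g :=
  AlgHom.ext_of_adjoin_eq_top adjoin_range_ι (by rintro _ ⟨m, rfl⟩; exact h m)

section Derivation

variable {N : Type*} [AddCommGroup N] [Module (SymmAlg A M) N] [Module A N]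

theorem derivation_ext {D₁ D₂ : Derivation A (SymmAlg A M) N}
    (h : ∀ m, D₁ (ι A M m) = D₂ (ι A M m)) : D₁ = D₂ :=
  Derivation.ext_of_adjoin_eq_top _ adjoin_range_ι (by rintro _ ⟨m, rfl⟩; exact h m)

variable [IsScalarTower A (SymmAlg A M) N] [Module (SymmAlg A M)ᵐᵒᵖ N]
  [IsCentralScalar (SymmAlg A M) N] [IsScalarTower A (SymmAlg A M)ᵐᵒᵖ N]

def liftDerivation (f : M →ₗ[A] N) : Derivation A (SymmAlg A M) N :=
  Derivation.ofSectionTrivSqZeroExt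
    (lift ((inlAlgHom A (SymmAlg A M) N).toLinearMap ∘ₗ ι A M +
      (inrHom (SymmAlg A M) N).restrictScalars A ∘ₗ f))
    (algHom_ext fun m => by simp)

@[simp]
theorem liftDerivation_ι (f : M →ₗ[A] N) (m : M) : liftDerivation f (ι A M m) = f m := by
  simp [liftDerivation, Derivation.ofSectionTrivSqZeroExt]

end Derivation

end SymmAlg

open KaehlerDifferential

theorem dIota_apply (m : M) : dIota A M m = D A (SymmAlg A M) (SymmAlg.ι A M m) := rfl

namespace SymmAlg

def kaehlerDifferentialEquiv : SymmAlg A M ⊗[A] M ≃ₗ[SymmAlg A M] Ω[SymmAlg A M⁄A] :=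
  LinearEquiv.ofLinearMap ((dIota A M).liftBaseChange (SymmAlg A M))
    (liftDerivation (TensorProduct.mk A (SymmAlg A M) M 1)).liftKaehlerDifferential
    (Derivation.liftKaehlerDifferential_unique _ _ <| derivation_ext fun m => by
      simp [dIota_apply])
    (by ext m; simp [dIota_apply])

theorem kaehlerDifferentialEquiv_tmul (b : SymmAlg A M) (m : M) :
    kaehlerDifferentialEquiv A M (b ⊗ₜ m) = b • D A (SymmAlg A M) (ι A M m) := rfl

end SymmAlg

theorem koszulMap_eq_comp_comm : koszulMap A M =
    (SymmAlg.kaehlerDifferentialEquiv A M).toLinearMap.restrictScalars A ∘ₗ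
      (TensorProduct.comm A M (SymmAlg A M)).toLinearMap := by
  ext m b
  simp [koszulMap, SymmAlg.kaehlerDifferentialEquiv_tmul, dIota_apply]

/-- the natural map `M ⊗_A B → Ω_{B/A}`, `m ⊗ b ↦ (dm)·b`, for
`B = Sym_A(M)`, is an isomorphism (of `B`-modules). -/
theorem stmt_5 : Function.Bijective (koszulMap A M) := by
  rw [koszulMap_eq_comp_comm]
  exact (SymmAlg.kaehlerDifferentialEquiv A M).bijective.comp
    (TensorProduct.comm A M (SymmAlg A M)).bijective

end
end

section
/- Let k be a field of characteristic zero, m ≥ 1, n ≥ 0, r ∈ ℤ. The k-dimension of the m-th cohomology of O(r) on projective superspace, identified with the degree-r part of (1/(x_0⋯x_m))k[1/x_0,…,1/x_m] ⊗ ⋀^•(θ_1,…,θ_n), equals Σ_{i=0}^{n} C(i−r−1, m)·C(n, i), where C(a,m)=0 for a<m≠0 and C(a,0)=1. -/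
/-- Binomial coefficient with the conventions `C(a,0) = 1` for any `a` and
`C(a,m) = 0` whenever `a < m ≠ 0` (in particular for `a < 0`). -/
def intChoose (a : ℤ) (m : ℕ) : ℕ :=
  if m = 0 then 1 else if a < 0 then 0 else a.toNat.choose m

/-- Stars-and-bars equivalence: tuples with fixed sum vs. multisets. -/
private noncomputable def eqSym (d M : ℕ) : {f : Fin d → ℕ // ∑ i, f i = M} ≃ Sym (Fin d) M where
  toFun f := ⟨(Finsupp.equivFunOnFinite.symm f.1).toMultiset, by
    rw [Finsupp.card_toMultiset, Finsupp.sum_fintype _ _ (fun _ => rfl)]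
    simpa using f.2⟩
  invFun s := ⟨fun i => s.1.count i, by
    have h : ∑ i : Fin d, s.1.count i = Multiset.card s.1 := by
      rw [← Multiset.toFinset_sum_count_eq s.1]
      exact (Finset.sum_subset (Finset.subset_univ _) (fun x _ hx =>
        Multiset.count_eq_zero_of_notMem (by simpa using hx))).symm
    rw [h, s.2]⟩
  left_inv f := by
    apply Subtype.ext; funext i
    simp [Finsupp.count_toMultiset]
  right_inv s := by
    apply Subtype.ext
    have h : Finsupp.equivFunOnFinite.symm (fun i => s.1.count i) = s.1.toFinsupp := by
      ext a; simp [Multiset.toFinsupp_apply]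
    simp only [h, Multiset.toFinsupp_toMultiset]

private lemma card_sum_eq (d M : ℕ) :
    Nat.card {f : Fin d → ℕ // ∑ i, f i = M} = (d + M - 1).choose M := by
  rw [Nat.card_congr (eqSym d M), Nat.card_eq_fintype_card, Sym.card_sym_eq_choose,
    Fintype.card_fin]

/-- The key counting lemma: the number of exponent vectors. -/
private lemma key (m : ℕ) (hm : 1 ≤ m) (r : ℤ) (c : ℤ) :
    Nat.card {a : Fin (m+1) → ℕ //
        (∀ j, 1 ≤ a j) ∧ c - ∑ j, (a j : ℤ) = r}
      = intChoose (c - r - 1) m := by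
  by_cases h : c - r < m + 1
  · have he : IsEmpty {a : Fin (m+1) → ℕ //
        (∀ j, 1 ≤ a j) ∧ c - ∑ j, (a j : ℤ) = r} := by
      constructor
      rintro ⟨a, h1, h2⟩
      have hle : (m + 1 : ℤ) ≤ ∑ j, (a j : ℤ) := by
        calc (m + 1 : ℤ) = ∑ _j : Fin (m+1), (1 : ℤ) := by simp
        _ ≤ ∑ j, (a j : ℤ) := Finset.sum_le_sum fun j _ => by exact_mod_cast h1 j
      omega
    rw [Nat.card_of_isEmpty]
    unfold intChoose
    rw [if_neg (by omega)]
    by_cases h0 : c - r - 1 < 0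
    · rw [if_pos h0]
    · rw [if_neg h0, Nat.choose_eq_zero_of_lt (by omega)]
  · push_neg at h
    set N : ℕ := (c - r).toNat with hN
    have hNm : m + 1 ≤ N := by omega
    have e : {a : Fin (m+1) → ℕ // (∀ j, 1 ≤ a j) ∧ c - ∑ j, (a j : ℤ) = r}
        ≃ {b : Fin (m+1) → ℕ // ∑ i, b i = N - (m+1)} := by
      refine ⟨fun a => ⟨fun j => a.1 j - 1, ?_⟩, fun b => ⟨fun j => b.1 j + 1, ?_, ?_⟩, ?_, ?_⟩
      · obtain ⟨a, h1, h2⟩ := a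
        show ∑ j, (a j - 1) = N - (m+1)
        have hsum : ∑ j, a j = N := by
          have : ((∑ j, a j : ℕ) : ℤ) = c - r := by push_cast; omega
          omega
        have h3 : ∑ j, (a j - 1 + 1) = ∑ j, a j :=
          Finset.sum_congr rfl fun j _ => Nat.succ_pred_eq_of_pos (h1 j)
        rw [Finset.sum_add_distrib] at h3
        simp only [Finset.sum_const, Finset.card_univ, Fintype.card_fin, smul_eq_mul,
          mul_one] at h3
        omega
      · exact fun j => Nat.le_add_left 1 _
      · obtain ⟨b, hb⟩ := b
        show c - ∑ j, ((b j + 1 : ℕ) : ℤ) = r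
        have hc : (∑ x : Fin (m+1), (b x : ℤ)) = ((N - (m+1) : ℕ) : ℤ) := by
          rw [← hb]; push_cast; rfl
        have hs : ∑ j, ((b j + 1 : ℕ) : ℤ) = (∑ x : Fin (m+1), (b x : ℤ)) + (m+1) := by
          push_cast
          rw [Finset.sum_add_distrib]
          simp
        rw [hs, hc]
        omega
      · rintro ⟨a, h1, h2⟩
        apply Subtype.ext; funext j
        exact Nat.succ_pred_eq_of_pos (h1 j)
      · rintro ⟨b, hb⟩
        apply Subtype.ext; funext j
        simp
    rw [Nat.card_congr e, card_sum_eq]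
    have h1 : m + 1 + (N - (m+1)) - 1 = N - 1 := by omega
    have h2 : N - (m+1) = N - 1 - m := by omega
    rw [h1, h2, Nat.choose_symm (by omega)]
    unfold intChoose
    rw [if_neg (by omega), if_neg (by omega)]
    congr 1
    omega

private lemma finT (m n : ℕ) (r : ℤ) (s : Finset (Fin n)) :
    Finite {a : Fin (m+1) → ℕ //
        (∀ j, 1 ≤ a j) ∧ (s.card : ℤ) - ∑ j, (a j : ℤ) = r} := by
  set N : ℕ := ((s.card : ℤ) - r).toNat with hN
  apply Finite.of_injective
    (fun x : {a : Fin (m+1) → ℕ //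
        (∀ j, 1 ≤ a j) ∧ (s.card : ℤ) - ∑ j, (a j : ℤ) = r} =>
      (fun j => (⟨min (x.1 j) N, by omega⟩ : Fin (N+1)) : Fin (m+1) → Fin (N+1)))
  rintro ⟨x, hx1, hx2⟩ ⟨y, hy1, hy2⟩ h
  have hbx : ∀ j, x j ≤ N := by
    intro j
    have h1 : (x j : ℤ) ≤ ∑ k, (x k : ℤ) :=
      Finset.single_le_sum (fun k _ => Int.natCast_nonneg _) (Finset.mem_univ j)
    omega
  have hby : ∀ j, y j ≤ N := by
    intro j
    have h1 : (y j : ℤ) ≤ ∑ k, (y k : ℤ) :=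
      Finset.single_le_sum (fun k _ => Int.natCast_nonneg _) (Finset.mem_univ j)
    omega
  apply Subtype.ext; funext j
  have := congrFun h j
  simp only [Fin.mk.injEq] at this
  rw [min_eq_left (hbx j), min_eq_left (hby j)] at this
  exact this

/-- the dimension of the degree-`r` part of
`(1/(x_0⋯x_m)) k[1/x_0,…,1/x_m] ⊗ ⋀^•(θ_1,…,θ_n)` — i.e. of
`H^m(P^{m|n}, O(r))` — equals `Σ_{i=0}^{n} C(i−r−1, m)·C(n, i)`: a basis of the
`⋀^i`-part is indexed by `i`-element subsets of `{1,…,n}` together with exponent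
vectors `(a_0,…,a_m)`, `a_j ≥ 1`, with `−Σ a_j + i = r`, and for each `i` the number
of such exponent vectors is `C(i−r−1, m)`. -/
theorem stmt_16 (m n : ℕ) (hm : 1 ≤ m) (r : ℤ) :
    (∀ i : ℕ,
      Nat.card {a : Fin (m+1) → ℕ //
          (∀ j, 1 ≤ a j) ∧ (i : ℤ) - ∑ j, (a j : ℤ) = r}
        = intChoose ((i : ℤ) - r - 1) m) ∧
    Nat.card {p : Finset (Fin n) × (Fin (m+1) → ℕ) //
        (∀ j, 1 ≤ p.2 j) ∧ (p.1.card : ℤ) - ∑ j, (p.2 j : ℤ) = r}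
      = ∑ i ∈ Finset.range (n+1), intChoose ((i : ℤ) - r - 1) m * Nat.choose n i := by
  constructor
  · intro i
    exact key m hm r i
  · have e := Equiv.subtypeProdEquivSigmaSubtype
      (fun (s : Finset (Fin n)) (a : Fin (m+1) → ℕ) =>
        (∀ j, 1 ≤ a j) ∧ (s.card : ℤ) - ∑ j, (a j : ℤ) = r)
    rw [Nat.card_congr e]
    have : ∀ s : Finset (Fin n), Fintype {a : Fin (m+1) → ℕ //
        (∀ j, 1 ≤ a j) ∧ (s.card : ℤ) - ∑ j, (a j : ℤ) = r} := by
      intro s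
      have := finT m n r s
      exact Fintype.ofFinite _
    rw [Nat.card_eq_fintype_card, Fintype.card_sigma]
    have hcard : ∀ s : Finset (Fin n), Fintype.card {a : Fin (m+1) → ℕ //
        (∀ j, 1 ≤ a j) ∧ (s.card : ℤ) - ∑ j, (a j : ℤ) = r}
          = intChoose ((s.card : ℤ) - r - 1) m := by
      intro s
      rw [Fintype.card_eq_nat_card]
      exact key m hm r s.card
    rw [Finset.sum_congr rfl fun s _ => hcard s]
    have hp : (Finset.univ : Finset (Finset (Fin n)))
        = (Finset.univ : Finset (Fin n)).powerset := by
      rw [Finset.powerset_univ]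
    rw [hp, Finset.sum_powerset_apply_card (fun i => intChoose ((i : ℤ) - r - 1) m)]
    rw [Finset.card_univ, Fintype.card_fin]
    refine Finset.sum_congr rfl fun i _ => ?_
    rw [smul_eq_mul, mul_comm]
end
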